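/- Assume μ(τ) ≠ 0 and that τ satisfies superpolynomial large deviation bounds: for each w > 0 and ε > 0 there exists C(ε, w) with μ(‖τ_N/N − μ(τ)‖ ≥ ε) ≤ C(ε, w) N^{−w} for all N ≥ 1. Let A₁, A₂ : X → ℝ and B₁, B₂ : Y → ℝ be bounded measurable functions such that for every m > 0 there exist constants C_m, C_m' with |μ(A₁ · (A₂ ∘ f^N)) − μ(A₁)μ(A₂)| ≤ C_m N^{−m} for all N ≥ 1, and |ν(B₁ · (B₂ ∘ G_t)) − ν(B₁)ν(B₂)| ≤ C_m' ‖t‖^{−m} for all t ∈ ℝ^d with ‖t‖ ≥ 1. Then, with Φ_i(x, y) = A_i(x)B_i(y), for every m > 0 there exists C'' with |∫ Φ₁ · (Φ₂ ∘ F^N) dζ − (∫ Φ₁ dζ)(∫ Φ₂ dζ)| ≤ C'' N^{−m} for all N ≥ 1. -/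

import Mathlib

open MeasureTheory Filter Topology

/-- Birkhoff sums `τ_N(x) = ∑_{n<N} τ(f^n x)` of an `ℝ^d`-valued observable. -/
noncomputable def birkhoff {X : Type*} {d : ℕ} (f : X → X)
    (τ : X → EuclideanSpace ℝ (Fin d)) (N : ℕ) (x : X) : EuclideanSpace ℝ (Fin d) :=
  ∑ n ∈ Finset.range N, τ (f^[n] x)

/-- The generalized `T,T⁻¹` (skew product) map `F(x,y) = (f x, G_{τ(x)} y)`. -/
def skew {X Y : Type*} {d : ℕ} (f : X → X) (G : EuclideanSpace ℝ (Fin d) → Y → Y)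
    (τ : X → EuclideanSpace ℝ (Fin d)) : X × Y → X × Y :=
  fun q => (f q.1, G (τ q.1) q.2)

open Asymptotics

/-!
Since `F^N (x, y) = (f^N x, G_{τ_N x} y)`, Fubini in `y` writes the correlation as
`∫ a_N (x) b (τ_N x) dμ` with `a_N = A₁ · A₂ ∘ f^N` and `b t = ν (B₁ · B₂ ∘ G_t)`. With
`β = ν B₁ · ν B₂` it splits as `∫ a_N (b ∘ τ_N - β) dμ + β (μ a_N - μ A₁ · μ A₂)`, and the
second term is the mixing of `f`. In the first, the set where `‖τ_N / N - μ τ‖ ≥ ‖μ τ‖ / 2` has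
measure `O(N^{-m})` by the large deviation bound; off it the nonzero drift gives
`‖τ_N‖ ≥ N ‖μ τ‖ / 2`, so `b ∘ τ_N - β = O(N^{-m})` by the mixing of `G`.
-/

lemma abs_mul_le_of_le {a b r s : ℝ} (ha : |a| ≤ r) (hb : |b| ≤ s) : |a * b| ≤ r * s :=
  norm_mul_le_of_le (a₁ := a) (a₂ := b) ha hb

section ProbabilityIntegral

variable {α : Type*} [MeasurableSpace α] {μ : Measure α} [IsProbabilityMeasure μ] {g : α → ℝ}

lemma abs_integral_le_of_forall_abs_le {K : ℝ} (h : ∀ x, |g x| ≤ K) : |∫ x, g x ∂μ| ≤ K := by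
  simpa using norm_integral_le_of_norm_le_const (μ := μ) (f := g) (Eventually.of_forall h)

lemma abs_integral_le_mul_measureReal_add {s : Set α} (hs : MeasurableSet s) {K δ : ℝ}
    (hδ : 0 ≤ δ) (hK : ∀ x, |g x| ≤ K) (hsδ : ∀ x ∉ s, |g x| ≤ δ) :
    |∫ x, g x ∂μ| ≤ K * μ.real s + δ := by
  have hpt : ∀ x, ‖g x‖ ≤ s.indicator (fun _ => K) x + δ := fun x => by
    by_cases hx : x ∈ s
    · simpa [hx] using (hK x).trans (le_add_of_nonneg_right hδ)
    · simpa [hx] using hsδ x hx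
  calc |∫ x, g x ∂μ| ≤ ∫ x, (s.indicator (fun _ => K) x + δ) ∂μ :=
        norm_integral_le_of_norm_le (((integrable_const K).indicator hs).add (integrable_const δ))
          (Eventually.of_forall hpt)
    _ = K * μ.real s + δ := by
        rw [integral_add ((integrable_const K).indicator hs) (integrable_const δ),
          integral_indicator_const K hs, integral_const, smul_eq_mul, smul_eq_mul]
        simp [mul_comm]

end ProbabilityIntegral

lemma isBigO_rpow_neg_iff {u : ℕ → ℝ} {m : ℝ} :
    u =O[atTop] (fun N : ℕ => (N : ℝ) ^ (-m)) ↔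
      ∃ C, ∀ N : ℕ, 1 ≤ N → |u N| ≤ C * (N : ℝ) ^ (-m) := by
  constructor
  · intro h
    -- the weight does not vanish on `N ≥ 1`, so finitely many exceptions are absorbed into `C`
    have hshift := h.comp_tendsto (tendsto_add_atTop_nat 1)
    rw [← Nat.cofinite_eq_atTop, isBigO_cofinite_iff fun N hN => by
      simp [Function.comp, (Real.rpow_pos_of_pos (Nat.cast_add_one_pos N) (-m)).ne'] at hN] at hshift
    obtain ⟨C, hC⟩ := hshift
    refine ⟨C, fun N hN => ?_⟩
    obtain ⟨k, rfl⟩ := Nat.exists_eq_add_of_le' hN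
    simpa [Real.norm_eq_abs, abs_of_nonneg (Real.rpow_nonneg (Nat.cast_add_one_pos k).le _)]
      using hC k
  · rintro ⟨C, hC⟩
    refine IsBigO.of_bound C (eventually_atTop.2 ⟨1, fun N hN => ?_⟩)
    rw [Real.norm_eq_abs, Real.norm_of_nonneg (Real.rpow_nonneg (Nat.cast_nonneg _) _)]
    exact hC N hN

lemma le_norm_of_norm_inv_smul_sub_lt {E : Type*} [NormedAddCommGroup E] [NormedSpace ℝ E]
    {v c : E} {N : ℝ} (hN : 0 < N) (h : ‖N⁻¹ • v - c‖ < ‖c‖ / 2) : N * (‖c‖ / 2) ≤ ‖v‖ := by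
  have hrev : ‖c‖ - ‖N⁻¹ • v‖ ≤ ‖N⁻¹ • v - c‖ := by
    rw [norm_sub_rev]; exact norm_sub_norm_le c _
  have : ‖c‖ / 2 ≤ N⁻¹ * ‖v‖ := by
    rw [norm_smul, Real.norm_of_nonneg (inv_nonneg.2 hN.le)] at hrev; linarith
  calc N * (‖c‖ / 2) ≤ N * (N⁻¹ * ‖v‖) := by gcongr
    _ = ‖v‖ := by field_simp

lemma isBigO_integral_mul_comp_of_largeDeviation {X E : Type*} [MeasurableSpace X]
    [NormedAddCommGroup E] [NormedSpace ℝ E] [MeasurableSpace E] [BorelSpace E]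
    {μ : Measure X} [IsProbabilityMeasure μ] {m : ℝ} (hm : 0 ≤ m)
    {S : ℕ → X → E} (hS : ∀ N, Measurable (S N)) {c : E} (hc : c ≠ 0)
    (hLD : ∃ C, ∀ N : ℕ, 1 ≤ N →
      μ.real {x | ‖c‖ / 2 ≤ ‖(N : ℝ)⁻¹ • S N x - c‖} ≤ C * (N : ℝ) ^ (-m))
    {a : ℕ → X → ℝ} {K : ℝ} (ha : ∀ N x, |a N x| ≤ K)
    {e : E → ℝ} {L : ℝ} (heL : ∀ t, |e t| ≤ L)
    (he : ∃ C, ∀ t, 1 ≤ ‖t‖ → |e t| ≤ C * ‖t‖ ^ (-m)) :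
    (fun N => ∫ x, a N x * e (S N x) ∂μ) =O[atTop] fun N : ℕ => (N : ℝ) ^ (-m) := by
  obtain ⟨C₀, hC₀⟩ := hLD
  obtain ⟨C₁, hC₁⟩ := he
  obtain ⟨x₀⟩ := nonempty_of_isProbabilityMeasure μ
  have hK : 0 ≤ K := (abs_nonneg _).trans (ha 0 x₀)
  have hL : 0 ≤ L := (abs_nonneg _).trans (heL 0)
  set ε := ‖c‖ / 2
  have hε : 0 < ε := half_pos (norm_pos_iff.2 hc)
  set C := max C₁ 0
  refine IsBigO.of_bound (K * L * C₀ + K * (C * ε ^ (-m)))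
    (eventually_atTop.2 ⟨⌈ε⁻¹⌉₊ + 1, fun N hN => ?_⟩)
  have hN1 : 1 ≤ N := le_of_add_le_right hN
  have hNpos : (0 : ℝ) < N := by exact_mod_cast hN1
  have hNε : 1 ≤ N * ε := by
    have : ε⁻¹ ≤ N := (Nat.le_ceil _).trans (by exact_mod_cast le_of_add_le_left hN)
    calc (1 : ℝ) = ε⁻¹ * ε := (inv_mul_cancel₀ hε.ne').symm
      _ ≤ N * ε := by gcongr
  set s := {x | ε ≤ ‖(N : ℝ)⁻¹ • S N x - c‖}
  have hs : MeasurableSet s :=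
    measurableSet_le measurable_const (((hS N).const_smul _).sub_const _).norm
  have hgood : ∀ x ∉ s, |a N x * e (S N x)| ≤ K * (C * ε ^ (-m) * (N : ℝ) ^ (-m)) := by
    intro x hx
    have hSN := le_norm_of_norm_inv_smul_sub_lt hNpos (not_le.1 hx)
    refine abs_mul_le_of_le (ha N x) ?_
    calc |e (S N x)| ≤ C * ‖S N x‖ ^ (-m) :=
          (hC₁ _ (hNε.trans hSN)).trans (by gcongr; exact le_max_left _ _)
      _ ≤ C * (N * ε) ^ (-m) := mul_le_mul_of_nonneg_left
          (Real.rpow_le_rpow_of_nonpos (by positivity) hSN (neg_nonpos.2 hm)) (le_max_right _ _)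
      _ = C * ε ^ (-m) * (N : ℝ) ^ (-m) := by rw [Real.mul_rpow hNpos.le hε.le]; ring
  calc ‖∫ x, a N x * e (S N x) ∂μ‖
      ≤ K * L * μ.real s + K * (C * ε ^ (-m) * (N : ℝ) ^ (-m)) :=
        abs_integral_le_mul_measureReal_add hs (by positivity)
          (fun x => abs_mul_le_of_le (ha N x) (heL _)) hgood
    _ ≤ K * L * (C₀ * (N : ℝ) ^ (-m)) + K * (C * ε ^ (-m) * (N : ℝ) ^ (-m)) := by
        gcongr; exact hC₀ N hN1
    _ = (K * L * C₀ + K * (C * ε ^ (-m))) * ‖(N : ℝ) ^ (-m)‖ := by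
        rw [Real.norm_of_nonneg (by positivity)]; ring

section SkewProduct

variable {X Y : Type*} {d : ℕ} (f : X → X) (G : EuclideanSpace ℝ (Fin d) → Y → Y)
  (τ : X → EuclideanSpace ℝ (Fin d))

lemma birkhoff_succ (N : ℕ) (x : X) : birkhoff f τ (N + 1) x = birkhoff f τ N (f x) + τ x := by
  simp [birkhoff, Finset.sum_range_succ', Function.iterate_succ_apply]

lemma measurable_birkhoff [MeasurableSpace X] (hf : Measurable f) (hτ : Measurable τ) (N : ℕ) :
    Measurable (birkhoff f τ N) :=
  Finset.measurable_sum _ fun n _ => hτ.comp (hf.iterate n)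

variable {G}

lemma skew_iterate (hG0 : G 0 = id) (hGadd : ∀ t s, G (t + s) = G t ∘ G s) (N : ℕ) (q : X × Y) :
    (skew f G τ)^[N] q = (f^[N] q.1, G (birkhoff f τ N q.1) q.2) := by
  induction N generalizing q with
  | zero => simp [birkhoff, hG0]
  | succ N ih =>
    rw [Function.iterate_succ_apply, ih, birkhoff_succ, hGadd]
    rfl

variable [MeasurableSpace X] [MeasurableSpace Y] {μ : Measure X} {ν : Measure Y}

lemma integral_prod_mul_skew_iterate [IsFiniteMeasure μ] [IsFiniteMeasure ν] (hf : Measurable f)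
    (hGmeas : Measurable fun q : EuclideanSpace ℝ (Fin d) × Y => G q.1 q.2)
    (hG0 : G 0 = id) (hGadd : ∀ t s, G (t + s) = G t ∘ G s) (hτ : Measurable τ)
    {A₁ A₂ : X → ℝ} {B₁ B₂ : Y → ℝ} (hA₁ : Measurable A₁) (hA₂ : Measurable A₂)
    (hB₁ : Measurable B₁) (hB₂ : Measurable B₂) {a₁ a₂ b₁ b₂ : ℝ}
    (hA₁b : ∀ x, |A₁ x| ≤ a₁) (hA₂b : ∀ x, |A₂ x| ≤ a₂)
    (hB₁b : ∀ y, |B₁ y| ≤ b₁) (hB₂b : ∀ y, |B₂ y| ≤ b₂) (N : ℕ) :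
    ∫ q, (A₁ q.1 * B₁ q.2) * (A₂ ((skew f G τ)^[N] q).1 * B₂ ((skew f G τ)^[N] q).2)
        ∂(μ.prod ν)
      = ∫ x, A₁ x * A₂ (f^[N] x) * ∫ y, B₁ y * B₂ (G (birkhoff f τ N x) y) ∂ν ∂μ := by
  have hprod : Integrable (fun q : X × Y => A₁ q.1 * A₂ (f^[N] q.1)
      * (B₁ q.2 * B₂ (G (birkhoff f τ N q.1) q.2))) (μ.prod ν) := by
    refine Integrable.of_bound (Measurable.aestronglyMeasurable ?_) _
      (Eventually.of_forall fun q => abs_mul_le_of_le (abs_mul_le_of_le (hA₁b _) (hA₂b _))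
        (abs_mul_le_of_le (hB₁b _) (hB₂b _)))
    have hτN := measurable_birkhoff f τ hf hτ N
    exact ((hA₁.comp measurable_fst).mul ((hA₂.comp (hf.iterate N)).comp measurable_fst)).mul
      ((hB₁.comp measurable_snd).mul
        (hB₂.comp (hGmeas.comp ((hτN.comp measurable_fst).prodMk measurable_snd))))
  calc _ = ∫ q, A₁ q.1 * A₂ (f^[N] q.1) * (B₁ q.2 * B₂ (G (birkhoff f τ N q.1) q.2))
        ∂(μ.prod ν) := by
        refine integral_congr_ae (Eventually.of_forall fun q => ?_)
        simp only [skew_iterate f τ hG0 hGadd]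
        ring
    _ = _ := by simp only [integral_prod _ hprod, integral_const_mul]

lemma integral_mul_skew_iterate_sub_eq [IsProbabilityMeasure μ] [IsProbabilityMeasure ν]
    (hf : Measurable f)
    (hGmeas : Measurable fun q : EuclideanSpace ℝ (Fin d) × Y => G q.1 q.2)
    (hG0 : G 0 = id) (hGadd : ∀ t s, G (t + s) = G t ∘ G s) (hτ : Measurable τ)
    {A₁ A₂ : X → ℝ} {B₁ B₂ : Y → ℝ} (hA₁ : Measurable A₁) (hA₂ : Measurable A₂)
    (hB₁ : Measurable B₁) (hB₂ : Measurable B₂) {a₁ a₂ b₁ b₂ : ℝ}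
    (hA₁b : ∀ x, |A₁ x| ≤ a₁) (hA₂b : ∀ x, |A₂ x| ≤ a₂)
    (hB₁b : ∀ y, |B₁ y| ≤ b₁) (hB₂b : ∀ y, |B₂ y| ≤ b₂) (N : ℕ) :
    (∫ q, (A₁ q.1 * B₁ q.2) * (A₂ ((skew f G τ)^[N] q).1 * B₂ ((skew f G τ)^[N] q).2)
        ∂(μ.prod ν))
      - (∫ q, A₁ q.1 * B₁ q.2 ∂(μ.prod ν)) * ∫ q, A₂ q.1 * B₂ q.2 ∂(μ.prod ν)
    = (∫ x, A₁ x * A₂ (f^[N] x) * ((∫ y, B₁ y * B₂ (G (birkhoff f τ N x) y) ∂ν)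
          - (∫ y, B₁ y ∂ν) * ∫ y, B₂ y ∂ν) ∂μ)
      + ((∫ y, B₁ y ∂ν) * ∫ y, B₂ y ∂ν)
        * ((∫ x, A₁ x * A₂ (f^[N] x) ∂μ) - (∫ x, A₁ x ∂μ) * ∫ x, A₂ x ∂μ) := by
  set a : X → ℝ := fun x => A₁ x * A₂ (f^[N] x)
  set b : EuclideanSpace ℝ (Fin d) → ℝ := fun t => ∫ y, B₁ y * B₂ (G t y) ∂ν
  have ha_int : Integrable a μ :=
    Integrable.of_bound (hA₁.mul (hA₂.comp (hf.iterate N))).aestronglyMeasurable _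
      (Eventually.of_forall fun x => abs_mul_le_of_le (hA₁b x) (hA₂b _))
  have hb : Measurable b :=
    ((hB₁.comp measurable_snd).mul (hB₂.comp hGmeas)).stronglyMeasurable.integral_prod_right'
      |>.measurable
  have hab_int : Integrable (fun x => a x * b (birkhoff f τ N x)) μ :=
    ha_int.mul_bdd (hb.comp (measurable_birkhoff f τ hf hτ N)).aestronglyMeasurable
      (Eventually.of_forall fun x =>
        abs_integral_le_of_forall_abs_le fun y => abs_mul_le_of_le (hB₁b y) (hB₂b _))
  have hsplit (β : ℝ) : ∫ x, a x * (b (birkhoff f τ N x) - β) ∂μ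
      = ∫ x, a x * b (birkhoff f τ N x) ∂μ - (∫ x, a x ∂μ) * β := by
    rw [← integral_mul_const, ← integral_sub hab_int (ha_int.mul_const _)]
    simp_rw [mul_sub]
  rw [integral_prod_mul_skew_iterate f τ hf hGmeas hG0 hGadd hτ hA₁ hA₂ hB₁ hB₂ hA₁b hA₂b hB₁b
    hB₂b, hsplit, integral_prod_mul A₁ B₁, integral_prod_mul A₂ B₂]
  ring

end SkewProduct

theorem stmt_3_general
    {X Y : Type*} [MeasurableSpace X] [MeasurableSpace Y]
    (μ : Measure X) (ν : Measure Y)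
    [IsProbabilityMeasure μ] [IsProbabilityMeasure ν]
    {d : ℕ}
    (f : X → X) (hf : MeasurePreserving f μ μ)
    (G : EuclideanSpace ℝ (Fin d) → Y → Y)
    (hGmeas : Measurable fun q : EuclideanSpace ℝ (Fin d) × Y => G q.1 q.2)
    (hG0 : G 0 = id)
    (hGadd : ∀ t s, G (t + s) = G t ∘ G s)
    (τ : X → EuclideanSpace ℝ (Fin d)) (hτmeas : Measurable τ)
    (hdrift : (∫ x, τ x ∂μ) ≠ 0)
    -- superpolynomial large deviation bounds for τ
    (hLD : ∀ w : ℝ, 0 < w → ∀ ε : ℝ, 0 < ε → ∃ C : ℝ, ∀ N : ℕ, 1 ≤ N →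
      (μ {x | ε ≤ ‖(N : ℝ)⁻¹ • birkhoff f τ N x - ∫ x, τ x ∂μ‖}).toReal
        ≤ C * (N : ℝ) ^ (-w))
    (A₁ A₂ : X → ℝ) (B₁ B₂ : Y → ℝ)
    (hA₁ : Measurable A₁) (hA₂ : Measurable A₂)
    (hB₁ : Measurable B₁) (hB₂ : Measurable B₂)
    (hA₁b : ∃ M, ∀ x, |A₁ x| ≤ M) (hA₂b : ∃ M, ∀ x, |A₂ x| ≤ M)
    (hB₁b : ∃ M, ∀ y, |B₁ y| ≤ M) (hB₂b : ∃ M, ∀ y, |B₂ y| ≤ M)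
    -- rapid mixing of f for A₁, A₂
    (hfmix : ∀ m : ℝ, 0 < m → ∃ Cm : ℝ, ∀ N : ℕ, 1 ≤ N →
      |(∫ x, A₁ x * A₂ (f^[N] x) ∂μ) - (∫ x, A₁ x ∂μ) * ∫ x, A₂ x ∂μ|
        ≤ Cm * (N : ℝ) ^ (-m))
    -- rapid mixing of G for B₁, B₂
    (hGmix : ∀ m : ℝ, 0 < m → ∃ Cm' : ℝ, ∀ t : EuclideanSpace ℝ (Fin d), 1 ≤ ‖t‖ →
      |(∫ y, B₁ y * B₂ (G t y) ∂ν) - (∫ y, B₁ y ∂ν) * ∫ y, B₂ y ∂ν|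
        ≤ Cm' * ‖t‖ ^ (-m)) :
    ∀ m : ℝ, 0 < m → ∃ C'' : ℝ, ∀ N : ℕ, 1 ≤ N →
      |(∫ q, (A₁ q.1 * B₁ q.2) * (A₂ ((skew f G τ)^[N] q).1 * B₂ ((skew f G τ)^[N] q).2)
          ∂(μ.prod ν))
        - (∫ q, A₁ q.1 * B₁ q.2 ∂(μ.prod ν)) * ∫ q, A₂ q.1 * B₂ q.2 ∂(μ.prod ν)|
        ≤ C'' * (N : ℝ) ^ (-m) := by
  intro m hm
  obtain ⟨a₁, ha₁⟩ := hA₁b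
  obtain ⟨a₂, ha₂⟩ := hA₂b
  obtain ⟨b₁, hb₁⟩ := hB₁b
  obtain ⟨b₂, hb₂⟩ := hB₂b
  have hB₁₂ : ∀ t, |∫ y, B₁ y * B₂ (G t y) ∂ν| ≤ b₁ * b₂ := fun t =>
    abs_integral_le_of_forall_abs_le fun y => abs_mul_le_of_le (hb₁ y) (hb₂ _)
  have hβ : |(∫ y, B₁ y ∂ν) * ∫ y, B₂ y ∂ν| ≤ b₁ * b₂ :=
    abs_mul_le_of_le (abs_integral_le_of_forall_abs_le hb₁) (abs_integral_le_of_forall_abs_le hb₂)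
  have hflow : (fun N => ∫ x, A₁ x * A₂ (f^[N] x) * ((∫ y, B₁ y * B₂ (G (birkhoff f τ N x) y) ∂ν)
      - (∫ y, B₁ y ∂ν) * ∫ y, B₂ y ∂ν) ∂μ) =O[atTop] fun N : ℕ => (N : ℝ) ^ (-m) :=
    isBigO_integral_mul_comp_of_largeDeviation (a := fun N x => A₁ x * A₂ (f^[N] x))
      (e := fun t => (∫ y, B₁ y * B₂ (G t y) ∂ν) - (∫ y, B₁ y ∂ν) * ∫ y, B₂ y ∂ν)
      hm.le (measurable_birkhoff f τ hf.measurable hτmeas) hdrift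
      (hLD m hm _ (half_pos (norm_pos_iff.2 hdrift))) (fun N x => abs_mul_le_of_le (ha₁ x) (ha₂ _))
      (fun t => (abs_sub _ _).trans (add_le_add (hB₁₂ t) hβ)) (hGmix m hm)
  have hbase := (isBigO_rpow_neg_iff.2 (hfmix m hm)).const_mul_left
    ((∫ y, B₁ y ∂ν) * ∫ y, B₂ y ∂ν)
  exact isBigO_rpow_neg_iff.1 ((hflow.add hbase).congr_left fun N =>
    (integral_mul_skew_iterate_sub_eq f τ hf.measurable hGmeas hG0 hGadd hτmeas hA₁ hA₂ hB₁ hB₂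
      ha₁ ha₂ hb₁ hb₂ N).symm)

/-- Theorem 4.1(c) of the paper: nonzero drift, superpolynomial large deviation bounds and
rapid mixing of `f` and `G` (for the given observables) imply rapid mixing of the skew
product `F` for product observables. -/
theorem stmt_3
    {X Y : Type*} [MeasurableSpace X] [MeasurableSpace Y]
    (μ : Measure X) (ν : Measure Y)
    [IsProbabilityMeasure μ] [IsProbabilityMeasure ν]
    {d : ℕ}
    (f : X → X) (hf : MeasurePreserving f μ μ)
    (G : EuclideanSpace ℝ (Fin d) → Y → Y)
    (hGmeas : Measurable fun q : EuclideanSpace ℝ (Fin d) × Y => G q.1 q.2)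
    (hG0 : G 0 = id)
    (hGadd : ∀ t s, G (t + s) = G t ∘ G s)
    (hGpres : ∀ t, MeasurePreserving (G t) ν ν)
    (τ : X → EuclideanSpace ℝ (Fin d)) (hτmeas : Measurable τ)
    (hτbdd : ∃ M, ∀ x, ‖τ x‖ ≤ M)
    (hdrift : (∫ x, τ x ∂μ) ≠ 0)
    -- superpolynomial large deviation bounds for τ
    (hLD : ∀ w : ℝ, 0 < w → ∀ ε : ℝ, 0 < ε → ∃ C : ℝ, ∀ N : ℕ, 1 ≤ N →
      (μ {x | ε ≤ ‖(N : ℝ)⁻¹ • birkhoff f τ N x - ∫ x, τ x ∂μ‖}).toReal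
        ≤ C * (N : ℝ) ^ (-w))
    (A₁ A₂ : X → ℝ) (B₁ B₂ : Y → ℝ)
    (hA₁ : Measurable A₁) (hA₂ : Measurable A₂)
    (hB₁ : Measurable B₁) (hB₂ : Measurable B₂)
    (hA₁b : ∃ M, ∀ x, |A₁ x| ≤ M) (hA₂b : ∃ M, ∀ x, |A₂ x| ≤ M)
    (hB₁b : ∃ M, ∀ y, |B₁ y| ≤ M) (hB₂b : ∃ M, ∀ y, |B₂ y| ≤ M)
    -- rapid mixing of f for A₁, A₂
    (hfmix : ∀ m : ℝ, 0 < m → ∃ Cm : ℝ, ∀ N : ℕ, 1 ≤ N →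
      |(∫ x, A₁ x * A₂ (f^[N] x) ∂μ) - (∫ x, A₁ x ∂μ) * ∫ x, A₂ x ∂μ|
        ≤ Cm * (N : ℝ) ^ (-m))
    -- rapid mixing of G for B₁, B₂
    (hGmix : ∀ m : ℝ, 0 < m → ∃ Cm' : ℝ, ∀ t : EuclideanSpace ℝ (Fin d), 1 ≤ ‖t‖ →
      |(∫ y, B₁ y * B₂ (G t y) ∂ν) - (∫ y, B₁ y ∂ν) * ∫ y, B₂ y ∂ν|
        ≤ Cm' * ‖t‖ ^ (-m)) :
    ∀ m : ℝ, 0 < m → ∃ C'' : ℝ, ∀ N : ℕ, 1 ≤ N →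
      |(∫ q, (A₁ q.1 * B₁ q.2) * (A₂ ((skew f G τ)^[N] q).1 * B₂ ((skew f G τ)^[N] q).2)
          ∂(μ.prod ν))
        - (∫ q, A₁ q.1 * B₁ q.2 ∂(μ.prod ν)) * ∫ q, A₂ q.1 * B₂ q.2 ∂(μ.prod ν)|
        ≤ C'' * (N : ℝ) ^ (-m) :=
  stmt_3_general μ ν f hf G hGmeas hG0 hGadd τ hτmeas hdrift hLD A₁ A₂ B₁ B₂ hA₁ hA₂ hB₁ hB₂ hA₁b
    hA₂b hB₁b hB₂b hfmix hGmix
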